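/- For any p ∈ [1,∞), any depth-d network N_{W₁^d} with 1-Lipschitz activations vanishing at 0, satisfying ∏_{j=1}^d ‖W_j‖ ≥ Γ (spectral norms) and ∏_{j=1}^d ‖W_j‖_p ≤ M (Schatten p-norms), and any r ∈ {1,…,d}, there exists a network N_{W̃₁^d} of the same architecture identical to N_{W₁^d} except that the parameter matrix in some layer r' ∈ {1,…,r} is replaced by a matrix of rank at most 1 (equal to s·u·vᵀ for a leading singular value/vector pair of W_{r'}), such that sup_{‖x‖≤B} ‖N_{W₁^d}(x) − N_{W̃₁^d}(x)‖ ≤ B·(∏_{j=1}^d ‖W_j‖)·(2p·log(M/Γ)/r)^{1/p}. -/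

import Mathlib

noncomputable def singularValues {a b : ℕ} (W : Matrix (Fin a) (Fin b) ℝ) : Fin b → ℝ :=
  fun i => Real.sqrt ((show (W.transpose * W).IsHermitian by
    simpa using Matrix.isHermitian_conjTranspose_mul_self W).eigenvalues i)

/-- Schatten `p`-norm: the `ℓ_p` norm of the vector of singular values. -/
noncomputable def schattenNorm {a b : ℕ} (p : ℝ) (W : Matrix (Fin a) (Fin b) ℝ) : ℝ :=
  (∑ i, singularValues W i ^ p) ^ (1 / p)

/-- Spectral norm: the largest singular value. -/
noncomputable def specNorm {a b : ℕ} (W : Matrix (Fin a) (Fin b) ℝ) : ℝ :=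
  ⨆ i, singularValues W i

noncomputable def mulVecE {a b : ℕ} (W : Matrix (Fin a) (Fin b) ℝ)
    (x : EuclideanSpace ℝ (Fin b)) : EuclideanSpace ℝ (Fin a) :=
  WithLp.toLp 2 (W.mulVec x)

/-- The "activated stack": `actStack k x = σ_{k-1}(W_{k-1} ⋯ σ_0(W_0 x))`. -/
noncomputable def actStack (dims : ℕ → ℕ)
    (W : ∀ j : ℕ, Matrix (Fin (dims (j+1))) (Fin (dims j)) ℝ)
    (σ : ∀ j : ℕ, EuclideanSpace ℝ (Fin (dims (j+1))) → EuclideanSpace ℝ (Fin (dims (j+1)))) :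
    (k : ℕ) → EuclideanSpace ℝ (Fin (dims 0)) → EuclideanSpace ℝ (Fin (dims k))
  | 0 => fun x => x
  | k+1 => fun x => σ k (mulVecE (W k) (actStack dims W σ k x))

/-- Depth-`d` network (`d ≥ 1`): a final linear layer on top of the activated stack,
`netEval d x = W_{d-1} σ_{d-2}(W_{d-2} ⋯ σ_0(W_0 x))`. -/
noncomputable def netEval (dims : ℕ → ℕ)
    (W : ∀ j : ℕ, Matrix (Fin (dims (j+1))) (Fin (dims j)) ℝ)
    (σ : ∀ j : ℕ, EuclideanSpace ℝ (Fin (dims (j+1))) → EuclideanSpace ℝ (Fin (dims (j+1)))) :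
    (d : ℕ) → EuclideanSpace ℝ (Fin (dims 0)) → EuclideanSpace ℝ (Fin (dims d))
  | 0 => fun x => x
  | d+1 => fun x => mulVecE (W d) (actStack dims W σ d x)

/-!
Write `s_j = ‖W_j‖` and `S_j = ‖W_j‖_p`. Keeping only the top singular direction of `W_i` changes
that layer by at most `(S_i^p - s_i^p)^{1/p}` in operator norm, because every other singular value
`σ` satisfies `s_i^p + σ^p ≤ S_i^p`. The other layers are `s_j`-Lipschitz and the activations are
1-Lipschitz, so the network moves by at most `(S_i^p - s_i^p)^{1/p} ∏_{j ≠ i} s_j ‖x‖`.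

All ratios `S_j / s_j` are at least 1 and their product is at most `M / Γ`, so some layer `i < r`
has `S_i ≤ s_i (M/Γ)^{1/r}`; then `(S_i^p - s_i^p)/s_i^p ≤ exp(p log(M/Γ)/r) - 1 ≤ 2p log(M/Γ)/r`
as long as the exponent is at most 1. When `2p log(M/Γ)/r ≥ 1`, zeroing out a layer already
satisfies the bound.
-/

open scoped Matrix RealInnerProductSpace

open Finset

section SingularValues

variable {a b : ℕ} (W : Matrix (Fin a) (Fin b) ℝ)

lemma Matrix.isHermitian_transpose_mul_self : (Wᵀ * W).IsHermitian := by
  simpa using Matrix.isHermitian_conjTranspose_mul_self W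

noncomputable abbrev rightSingularBasis : OrthonormalBasis (Fin b) ℝ (EuclideanSpace ℝ (Fin b)) :=
  W.isHermitian_transpose_mul_self.eigenvectorBasis

lemma singularValues_nonneg (i : Fin b) : 0 ≤ singularValues W i := Real.sqrt_nonneg _

lemma sq_singularValues (i : Fin b) :
    singularValues W i ^ 2 = W.isHermitian_transpose_mul_self.eigenvalues i :=
  Real.sq_sqrt (Matrix.eigenvalues_conjTranspose_mul_self_nonneg W i)

lemma singularValues_le_specNorm (i : Fin b) : singularValues W i ≤ specNorm W :=
  le_ciSup (Set.finite_range _).bddAbove i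

lemma specNorm_nonneg : 0 ≤ specNorm W := by
  rcases isEmpty_or_nonempty (Fin b) with h | ⟨⟨i⟩⟩
  · simp [specNorm]
  · exact (singularValues_nonneg W i).trans (singularValues_le_specNorm W i)

lemma mulVecE_eq_toEuclideanLin : mulVecE W = Matrix.toEuclideanLin W := rfl

lemma mulVecE_sub (x y : EuclideanSpace ℝ (Fin b)) :
    mulVecE W (x - y) = mulVecE W x - mulVecE W y := by
  simp only [mulVecE_eq_toEuclideanLin, map_sub]

lemma norm_mulVecE_sq (x : EuclideanSpace ℝ (Fin b)) :
    ‖mulVecE W x‖ ^ 2 = ∑ i, singularValues W i ^ 2 * ⟪rightSingularBasis W i, x⟫ ^ 2 := by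
  set v := rightSingularBasis W
  set μ := W.isHermitian_transpose_mul_self.eigenvalues
  have hv : ∀ i, mulVecE (Wᵀ * W) (v i) = μ i • v i := fun i =>
    congrArg (WithLp.toLp 2) (W.isHermitian_transpose_mul_self.mulVec_eigenvectorBasis i)
  have hinner : ‖mulVecE W x‖ ^ 2 = ⟪x, mulVecE (Wᵀ * W) x⟫ := by
    rw [← real_inner_self_eq_norm_sq]
    simp only [mulVecE, EuclideanSpace.inner_eq_star_dotProduct, star_trivial,
      ← Matrix.mulVec_mulVec]
    rw [Matrix.dotProduct_mulVec, Matrix.mulVec_transpose, dotProduct_comm]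
  have hexpand : mulVecE (Wᵀ * W) x = ∑ i, (⟪v i, x⟫ * μ i) • v i := by
    conv_lhs => rw [← v.sum_repr' x]
    simp only [mulVecE_eq_toEuclideanLin, map_sum, map_smul] at hv ⊢
    simp only [hv, smul_smul]
  rw [hinner, hexpand, inner_sum]
  refine sum_congr rfl fun i _ => ?_
  rw [real_inner_smul_right, real_inner_comm, sq_singularValues]
  ring

lemma norm_mulVecE_le_of_singularValues_le {c : ℝ} (hc : 0 ≤ c) (x : EuclideanSpace ℝ (Fin b))
    (h : ∀ i, ⟪rightSingularBasis W i, x⟫ ≠ 0 → singularValues W i ≤ c) :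
    ‖mulVecE W x‖ ≤ c * ‖x‖ := by
  refine (pow_le_pow_iff_left₀ (norm_nonneg _) (by positivity) two_ne_zero).1 ?_
  rw [norm_mulVecE_sq, mul_pow, ← (rightSingularBasis W).sum_sq_inner_right x, mul_sum]
  refine sum_le_sum fun i _ => ?_
  by_cases hi : ⟪rightSingularBasis W i, x⟫ = 0
  · simp [hi]
  · gcongr
    exacts [singularValues_nonneg W i, h i hi]

lemma norm_mulVecE_le (x : EuclideanSpace ℝ (Fin b)) : ‖mulVecE W x‖ ≤ specNorm W * ‖x‖ :=
  norm_mulVecE_le_of_singularValues_le W (specNorm_nonneg W) x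
    fun i _ => singularValues_le_specNorm W i

lemma schattenNorm_nonneg (p : ℝ) : 0 ≤ schattenNorm p W :=
  Real.rpow_nonneg (sum_nonneg fun i _ => Real.rpow_nonneg (singularValues_nonneg W i) p) _

lemma schattenNorm_rpow {p : ℝ} (hp : p ≠ 0) :
    schattenNorm p W ^ p = ∑ i, singularValues W i ^ p := by
  rw [schattenNorm, ← Real.rpow_mul
    (sum_nonneg fun i _ => Real.rpow_nonneg (singularValues_nonneg W i) p),
    one_div_mul_cancel hp, Real.rpow_one]

lemma singularValues_rpow_add_le {p : ℝ} (hp : 0 < p) {i j : Fin b} (hij : i ≠ j) :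
    singularValues W i ^ p + singularValues W j ^ p ≤ schattenNorm p W ^ p := by
  rw [schattenNorm_rpow W hp.ne', ← sum_pair (f := fun k => singularValues W k ^ p) hij]
  exact sum_le_sum_of_subset_of_nonneg (subset_univ _)
    fun k _ _ => Real.rpow_nonneg (singularValues_nonneg W k) p

lemma singularValues_le_schattenNorm {p : ℝ} (hp : 0 < p) (i : Fin b) :
    singularValues W i ≤ schattenNorm p W := by
  refine (Real.rpow_le_rpow_iff (singularValues_nonneg W i) (schattenNorm_nonneg W p) hp).1 ?_
  rw [schattenNorm_rpow W hp.ne']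
  exact single_le_sum (fun k _ => Real.rpow_nonneg (singularValues_nonneg W k) p) (mem_univ i)

lemma specNorm_le_schattenNorm {p : ℝ} (hp : 0 < p) : specNorm W ≤ schattenNorm p W := by
  rcases isEmpty_or_nonempty (Fin b) with h | h
  · simpa [specNorm] using schattenNorm_nonneg W p
  · exact ciSup_le (singularValues_le_schattenNorm W hp)

lemma exists_rank_le_one_norm_mulVecE_sub_le {p : ℝ} (hp : 0 < p) :
    ∃ V : Matrix (Fin a) (Fin b) ℝ, V.rank ≤ 1 ∧ ∀ x, ‖mulVecE W x - mulVecE V x‖ ≤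
      (schattenNorm p W ^ p - specNorm W ^ p) ^ (1 / p) * ‖x‖ := by
  set ε := (schattenNorm p W ^ p - specNorm W ^ p) ^ (1 / p)
  have hε : 0 ≤ ε := Real.rpow_nonneg (sub_nonneg.2 (Real.rpow_le_rpow (specNorm_nonneg W)
    (specNorm_le_schattenNorm W hp) hp.le)) _
  rcases isEmpty_or_nonempty (Fin b) with hb | hb
  · refine ⟨0, by simp, fun x => ?_⟩
    simp [Subsingleton.elim x 0, mulVecE_eq_toEuclideanLin]
  obtain ⟨i₀, hi₀⟩ : ∃ i, singularValues W i = specNorm W := exists_eq_ciSup_of_finite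
  set u := rightSingularBasis W i₀
  refine ⟨Matrix.vecMulVec (W *ᵥ u) u, Matrix.rank_vecMulVec_le _ _, fun x => ?_⟩
  have hVx : mulVecE (Matrix.vecMulVec (W *ᵥ u) u) x = mulVecE W (⟪u, x⟫ • u) := by
    ext k
    simp [mulVecE, Matrix.vecMulVec_mulVec, Matrix.mulVec_smul,
      EuclideanSpace.inner_eq_star_dotProduct, dotProduct_comm]
  have hσ : ∀ i ≠ i₀, singularValues W i ≤ ε := fun i hi => by
    have hsum := singularValues_rpow_add_le W hp hi
    rw [hi₀] at hsum
    calc singularValues W i = (singularValues W i ^ p) ^ (1 / p) := by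
          rw [one_div, Real.rpow_rpow_inv (singularValues_nonneg W i) hp.ne']
      _ ≤ ε := Real.rpow_le_rpow (Real.rpow_nonneg (singularValues_nonneg W i) p)
          (by linarith) (by positivity)
  have hy : ‖x - ⟪u, x⟫ • u‖ ≤ ‖x‖ := by
    refine (pow_le_pow_iff_left₀ (norm_nonneg _) (norm_nonneg _) two_ne_zero).1 ?_
    rw [norm_sub_sq_real, norm_smul, real_inner_smul_right,
      (rightSingularBasis W).orthonormal.1 i₀, Real.norm_eq_abs, mul_one, sq_abs, real_inner_comm]
    nlinarith [sq_nonneg ⟪x, u⟫]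
  rw [hVx, ← mulVecE_sub]
  refine (norm_mulVecE_le_of_singularValues_le W hε _ fun i hi => hσ i ?_).trans
    (mul_le_mul_of_nonneg_left hy hε)
  rintro rfl
  simp [u, inner_sub_right, real_inner_smul_right] at hi

end SingularValues

lemma Finset.prod_range_succ_erase_of_ne {M : Type*} [CommMonoid M] (f : ℕ → M) {k i : ℕ}
    (hki : k ≠ i) :
    ∏ j ∈ (range (k + 1)).erase i, f j = f k * ∏ j ∈ (range k).erase i, f j := by
  rw [range_add_one, erase_insert_of_ne hki,
    prod_insert fun h => notMem_range_self (mem_of_mem_erase h)]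

lemma Finset.prod_range_succ_erase_self {M : Type*} [CommMonoid M] (f : ℕ → M) (k : ℕ) :
    ∏ j ∈ (range (k + 1)).erase k, f j = ∏ j ∈ range k, f j := by
  rw [range_add_one, erase_insert notMem_range_self]

section Network

variable {dims : ℕ → ℕ} {W V : ∀ j : ℕ, Matrix (Fin (dims (j+1))) (Fin (dims j)) ℝ}
  {σ : ∀ j : ℕ, EuclideanSpace ℝ (Fin (dims (j+1))) → EuclideanSpace ℝ (Fin (dims (j+1)))}
  {i : ℕ} {ε : ℝ}

lemma norm_actStack_le (hσ : ∀ j, LipschitzWith 1 (σ j)) (hσ0 : ∀ j, σ j 0 = 0) (k : ℕ)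
    (x : EuclideanSpace ℝ (Fin (dims 0))) :
    ‖actStack dims W σ k x‖ ≤ (∏ j ∈ range k, specNorm (W j)) * ‖x‖ := by
  induction k with
  | zero => simp [actStack]
  | succ k ih =>
    calc ‖actStack dims W σ (k + 1) x‖ ≤ ‖mulVecE (W k) (actStack dims W σ k x)‖ := by
          simpa [actStack, hσ0] using (hσ k).norm_sub_le (mulVecE (W k) (actStack dims W σ k x)) 0
      _ ≤ specNorm (W k) * ((∏ j ∈ range k, specNorm (W j)) * ‖x‖) :=
          (norm_mulVecE_le _ _).trans (mul_le_mul_of_nonneg_left ih (specNorm_nonneg _))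
      _ = (∏ j ∈ range (k + 1), specNorm (W j)) * ‖x‖ := by rw [prod_range_succ]; ring

lemma actStack_congr {k : ℕ} (h : ∀ j < k, V j = W j) :
    actStack dims V σ k = actStack dims W σ k := by
  induction k with
  | zero => rfl
  | succ k ih =>
    funext x
    simp only [actStack, h k k.lt_succ_self, ih fun j hj => h j (hj.trans k.lt_succ_self)]

lemma norm_mulVecE_actStack_sub_le (hσ : ∀ j, LipschitzWith 1 (σ j)) (hσ0 : ∀ j, σ j 0 = 0)
    (hV : ∀ j ≠ i, V j = W j) (hε : 0 ≤ ε)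
    (hWV : ∀ v, ‖mulVecE (W i) v - mulVecE (V i) v‖ ≤ ε * ‖v‖)
    (x : EuclideanSpace ℝ (Fin (dims 0))) {k : ℕ} (hk : i ≤ k) :
    ‖mulVecE (W k) (actStack dims W σ k x) - mulVecE (V k) (actStack dims V σ k x)‖ ≤
      ε * (∏ j ∈ (range (k + 1)).erase i, specNorm (W j)) * ‖x‖ := by
  induction k, hk using Nat.le_induction with
  | base =>
    rw [actStack_congr fun j hj => hV j hj.ne, prod_range_succ_erase_self, mul_assoc]
    exact (hWV _).trans (mul_le_mul_of_nonneg_left (norm_actStack_le hσ hσ0 i x) hε)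
  | succ k hik ih =>
    have hki : k + 1 ≠ i := by omega
    calc _ = ‖mulVecE (W (k + 1))
              (actStack dims W σ (k + 1) x - actStack dims V σ (k + 1) x)‖ := by
          rw [mulVecE_sub, hV _ hki]
      _ ≤ specNorm (W (k + 1)) *
            (ε * (∏ j ∈ (range (k + 1)).erase i, specNorm (W j)) * ‖x‖) := by
          refine (norm_mulVecE_le _ _).trans (mul_le_mul_of_nonneg_left ?_ (specNorm_nonneg _))
          exact ((hσ k).norm_sub_le _ _).trans (by simpa using ih)
      _ = _ := by rw [prod_range_succ_erase_of_ne _ hki]; ring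

lemma norm_netEval_sub_le (hσ : ∀ j, LipschitzWith 1 (σ j)) (hσ0 : ∀ j, σ j 0 = 0)
    (hV : ∀ j ≠ i, V j = W j) (hε : 0 ≤ ε)
    (hWV : ∀ v, ‖mulVecE (W i) v - mulVecE (V i) v‖ ≤ ε * ‖v‖) {d : ℕ} (hid : i < d)
    (x : EuclideanSpace ℝ (Fin (dims 0))) :
    ‖netEval dims W σ d x - netEval dims V σ d x‖ ≤
      ε * (∏ j ∈ (range d).erase i, specNorm (W j)) * ‖x‖ := by
  obtain ⟨m, rfl⟩ : ∃ m, d = m + 1 := ⟨d - 1, by omega⟩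
  exact norm_mulVecE_actStack_sub_le hσ hσ0 hV hε hWV x (by omega)

end Network

lemma exp_le_one_add_two_mul {z : ℝ} (h0 : 0 ≤ z) (h1 : z ≤ 1) : Real.exp z ≤ 1 + 2 * z := by
  -- convexity gives `exp z ≤ 1 + (e - 1) z`, and `e < 3`
  have hconv := convexOn_exp.2 (Set.mem_univ 0) (Set.mem_univ 1) (sub_nonneg.2 h1) h0
    (sub_add_cancel 1 z)
  simp only [smul_eq_mul, mul_zero, mul_one, zero_add, Real.exp_zero] at hconv
  nlinarith [Real.exp_one_lt_d9]

lemma rpow_sub_one_le_two_mul_log {x t : ℝ} (hx : 1 ≤ x) (ht : 0 ≤ t)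
    (h : Real.log x * t ≤ 1) : x ^ t - 1 ≤ 2 * (Real.log x * t) := by
  have := exp_le_one_add_two_mul (mul_nonneg (Real.log_nonneg hx) ht) h
  rw [Real.rpow_def_of_pos (by linarith)]
  linarith

lemma rpow_sub_rpow_rpow_one_div_le {s S κ p : ℝ} (hp : 0 < p) (hs : 0 ≤ s) (hκ : 1 ≤ κ)
    (hsS : s ≤ S) (hS : S ≤ s * κ) : (S ^ p - s ^ p) ^ (1 / p) ≤ s * (κ ^ p - 1) ^ (1 / p) := by
  have hsp : 0 ≤ s ^ p := Real.rpow_nonneg hs p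
  have hκp : 0 ≤ κ ^ p - 1 := sub_nonneg.2 (Real.one_le_rpow hκ hp.le)
  calc (S ^ p - s ^ p) ^ (1 / p) ≤ (s ^ p * (κ ^ p - 1)) ^ (1 / p) := by
        refine Real.rpow_le_rpow (sub_nonneg.2 (Real.rpow_le_rpow hs hsS hp.le)) ?_ (by positivity)
        have := Real.rpow_le_rpow (hs.trans hsS) hS hp.le
        rw [Real.mul_rpow hs (by linarith)] at this
        linarith
    _ = s * (κ ^ p - 1) ^ (1 / p) := by
        rw [Real.mul_rpow hsp hκp, one_div, Real.rpow_rpow_inv hs hp.ne']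

lemma exists_lt_le_rpow_inv_of_prod_le {t : ℕ → ℝ} {K : ℝ} {d r : ℕ} (hr : 0 < r) (hrd : r ≤ d)
    (ht : ∀ j < d, 1 ≤ t j) (hK : ∏ j ∈ range d, t j ≤ K) : ∃ j < r, t j ≤ K ^ (r : ℝ)⁻¹ := by
  by_contra! h
  have hK1 : 1 ≤ K := (one_le_prod fun j hj => ht j (mem_range.1 hj)).trans hK
  have : K < ∏ j ∈ range d, t j := calc
    K = ∏ _j ∈ range r, K ^ (r : ℝ)⁻¹ := by
      rw [prod_const, card_range, Real.rpow_inv_natCast_pow (by positivity) hr.ne']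
    _ < ∏ j ∈ range r, t j :=
      prod_lt_prod_of_nonempty (fun _ _ => Real.rpow_pos_of_pos (by positivity) _)
        (fun j hj => h j (mem_range.1 hj)) (nonempty_range_iff.2 hr.ne')
    _ ≤ ∏ j ∈ range d, t j :=
      prod_le_prod_of_subset_of_one_le (range_subset_range.2 hrd)
        (fun j hj => zero_le_one.trans (ht j ((mem_range.1 hj).trans_le hrd)))
        (fun j hj _ => ht j (mem_range.1 hj))
  linarith

section Layers

variable {dims : ℕ → ℕ} (W : ∀ j : ℕ, Matrix (Fin (dims (j+1))) (Fin (dims j)) ℝ)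
  {p Γ M : ℝ} {d r : ℕ}

lemma one_le_div_of_le_prod_specNorm (hp : 0 < p) (hΓ : 0 < Γ)
    (hΓle : Γ ≤ ∏ j ∈ range d, specNorm (W j)) (hM : ∏ j ∈ range d, schattenNorm p (W j) ≤ M) :
    1 ≤ M / Γ :=
  (one_le_div hΓ).2 <| hΓle.trans <| (prod_le_prod (fun _ _ => specNorm_nonneg _)
    fun _ _ => specNorm_le_schattenNorm _ hp).trans hM

lemma exists_lt_schattenNorm_le_specNorm_mul (hp : 0 < p) (hΓ : 0 < Γ)
    (hΓle : Γ ≤ ∏ j ∈ range d, specNorm (W j)) (hM : ∏ j ∈ range d, schattenNorm p (W j) ≤ M)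
    (hr : 0 < r) (hrd : r ≤ d) :
    ∃ i < r, schattenNorm p (W i) ≤ specNorm (W i) * (M / Γ) ^ (r : ℝ)⁻¹ := by
  have hspec : ∀ j < d, 0 < specNorm (W j) := fun j hj =>
    (specNorm_nonneg _).lt_of_ne fun h => by
      simpa [prod_eq_zero (f := fun j => specNorm (W j)) (mem_range.2 hj) h.symm]
        using hΓ.trans_le hΓle
  have hΓM := (one_le_div hΓ).1 (one_le_div_of_le_prod_specNorm W hp hΓ hΓle hM)
  obtain ⟨i, hir, hi⟩ := exists_lt_le_rpow_inv_of_prod_le (K := M / Γ) hr hrd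
    (fun j hj => (one_le_div (hspec j hj)).2 (specNorm_le_schattenNorm _ hp))
    ((prod_div_distrib ..).trans_le (div_le_div₀ (by linarith) hM hΓ hΓle))
  exact ⟨i, hir, by rwa [div_le_iff₀ (hspec i (hir.trans_le hrd)), mul_comm] at hi⟩

lemma exists_lt_rank_le_one_norm_mulVecE_sub_le (hp : 0 < p) (hΓ : 0 < Γ)
    (hΓle : Γ ≤ ∏ j ∈ range d, specNorm (W j)) (hM : ∏ j ∈ range d, schattenNorm p (W j) ≤ M)
    (hr : 0 < r) (hrd : r ≤ d) :
    ∃ i < r, ∃ V : Matrix (Fin (dims (i+1))) (Fin (dims i)) ℝ, V.rank ≤ 1 ∧ ∀ v,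
      ‖mulVecE (W i) v - mulVecE V v‖ ≤
        specNorm (W i) * (2 * p * Real.log (M / Γ) / r) ^ (1 / p) * ‖v‖ := by
  have hr' : (0 : ℝ) < r := Nat.cast_pos.2 hr
  have hMΓ := one_le_div_of_le_prod_specNorm W hp hΓ hΓle hM
  by_cases hlarge : 1 ≤ 2 * p * Real.log (M / Γ) / r
  · refine ⟨0, hr, 0, by simp, fun v => ?_⟩
    have hδ : 1 ≤ (2 * p * Real.log (M / Γ) / r) ^ (1 / p) :=
      Real.one_le_rpow hlarge (by positivity)
    calc ‖mulVecE (W 0) v - mulVecE 0 v‖ = ‖mulVecE (W 0) v‖ := by simp [mulVecE]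
      _ ≤ specNorm (W 0) * ‖v‖ := norm_mulVecE_le _ v
      _ ≤ _ := mul_le_mul_of_nonneg_right (le_mul_of_one_le_right (specNorm_nonneg _) hδ)
          (norm_nonneg v)
  obtain ⟨i, hir, hi⟩ := exists_lt_schattenNorm_le_specNorm_mul W hp hΓ hΓle hM hr hrd
  have hκ : 1 ≤ (M / Γ) ^ (r : ℝ)⁻¹ := Real.one_le_rpow hMΓ (by positivity)
  have hκp : ((M / Γ) ^ (r : ℝ)⁻¹) ^ p - 1 ≤ 2 * p * Real.log (M / Γ) / r := by
    have hz : Real.log (M / Γ) * ((r : ℝ)⁻¹ * p) = p * Real.log (M / Γ) / r := by ring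
    have key := rpow_sub_one_le_two_mul_log hMΓ (by positivity : 0 ≤ (r : ℝ)⁻¹ * p) (by
      rw [hz, div_le_one hr']
      linarith [(div_lt_one hr').1 (not_le.1 hlarge)])
    rw [hz] at key
    rw [← Real.rpow_mul (by positivity)]
    linarith [show 2 * (p * Real.log (M / Γ) / r) = 2 * p * Real.log (M / Γ) / r by ring]
  obtain ⟨V, hV, hWV⟩ := exists_rank_le_one_norm_mulVecE_sub_le (W i) hp
  refine ⟨i, hir, V, hV, fun v => (hWV v).trans (mul_le_mul_of_nonneg_right ?_ (norm_nonneg v))⟩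
  calc _ ≤ specNorm (W i) * (((M / Γ) ^ (r : ℝ)⁻¹) ^ p - 1) ^ (1 / p) :=
        rpow_sub_rpow_rpow_one_div_le hp (specNorm_nonneg _) hκ (specNorm_le_schattenNorm _ hp) hi
    _ ≤ _ := mul_le_mul_of_nonneg_left (Real.rpow_le_rpow
        (sub_nonneg.2 (Real.one_le_rpow hκ hp.le)) hκp (by positivity)) (specNorm_nonneg _)

end Layers

theorem rank_one_replacement_general (dims : ℕ → ℕ) (d : ℕ)
    (W : ∀ j : ℕ, Matrix (Fin (dims (j+1))) (Fin (dims j)) ℝ)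
    (σ : ∀ j : ℕ, EuclideanSpace ℝ (Fin (dims (j+1))) → EuclideanSpace ℝ (Fin (dims (j+1))))
    (hσ : ∀ j, LipschitzWith 1 (σ j)) (hσ0 : ∀ j, σ j 0 = 0)
    (p Γ M B : ℝ) (hp : 1 ≤ p) (hΓ : 0 < Γ)
    (hΓle : Γ ≤ ∏ j ∈ Finset.range d, specNorm (W j))
    (hM : ∏ j ∈ Finset.range d, schattenNorm p (W j) ≤ M)
    (r : ℕ) (hr1 : 1 ≤ r) (hrd : r ≤ d) :
    ∃ (r' : ℕ) (_ : r' < r)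
      (Wt : ∀ j : ℕ, Matrix (Fin (dims (j+1))) (Fin (dims j)) ℝ),
      (∀ j, j ≠ r' → Wt j = W j) ∧ (Wt r').rank ≤ 1 ∧
      ∀ x : EuclideanSpace ℝ (Fin (dims 0)), ‖x‖ ≤ B →
        ‖netEval dims W σ d x - netEval dims Wt σ d x‖ ≤
          B * (∏ j ∈ Finset.range d, specNorm (W j)) *
            (2 * p * Real.log (M / Γ) / r) ^ (1 / p) := by
  have hp0 : 0 < p := by linarith
  set δ := (2 * p * Real.log (M / Γ) / r) ^ (1 / p)
  have hδ : 0 ≤ δ := by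
    have := Real.log_nonneg (one_le_div_of_le_prod_specNorm W hp0 hΓ hΓle hM)
    exact Real.rpow_nonneg (by positivity) _
  obtain ⟨i, hir, V, hV, hWV⟩ :=
    exists_lt_rank_le_one_norm_mulVecE_sub_le W hp0 hΓ hΓle hM hr1 hrd
  have hid : i < d := hir.trans_le hrd
  refine ⟨i, hir, Function.update W i V, fun j hj => Function.update_of_ne hj _ _,
    by simpa using hV, fun x hx => ?_⟩
  calc _ ≤ specNorm (W i) * δ * (∏ j ∈ (range d).erase i, specNorm (W j)) * ‖x‖ :=
        norm_netEval_sub_le hσ hσ0 (fun j hj => Function.update_of_ne hj _ _)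
          (mul_nonneg (specNorm_nonneg _) hδ) (by simpa only [Function.update_self]) hid x
    _ = (∏ j ∈ range d, specNorm (W j)) * δ * ‖x‖ := by
        rw [← mul_prod_erase _ _ (mem_range.2 hid)]
        ring
    _ ≤ (∏ j ∈ range d, specNorm (W j)) * δ * B :=
        mul_le_mul_of_nonneg_left hx (mul_nonneg (prod_nonneg fun _ _ => specNorm_nonneg _) hδ)
    _ = B * (∏ j ∈ range d, specNorm (W j)) * δ := by ring

/-- rank-1 replacement theorem. If `∏ ‖W_j‖ ≥ Γ` and `∏ ‖W_j‖_p ≤ M`, then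
for any `r ∈ {1,…,d}` one can replace the parameter matrix of some layer `r' ≤ r`
(0-indexed: `r' < r`) by a matrix of rank at most 1 so that the network output changes by
at most `B·(∏ ‖W_j‖)·(2p·log(M/Γ)/r)^{1/p}` on `{‖x‖ ≤ B}`. -/
theorem rank_one_replacement (dims : ℕ → ℕ) (d : ℕ) (hd : 1 ≤ d)
    (W : ∀ j : ℕ, Matrix (Fin (dims (j+1))) (Fin (dims j)) ℝ)
    (σ : ∀ j : ℕ, EuclideanSpace ℝ (Fin (dims (j+1))) → EuclideanSpace ℝ (Fin (dims (j+1))))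
    (hσ : ∀ j, LipschitzWith 1 (σ j)) (hσ0 : ∀ j, σ j 0 = 0)
    (p Γ M B : ℝ) (hp : 1 ≤ p) (hΓ : 0 < Γ) (hB : 0 ≤ B)
    (hΓle : Γ ≤ ∏ j ∈ Finset.range d, specNorm (W j))
    (hM : ∏ j ∈ Finset.range d, schattenNorm p (W j) ≤ M)
    (r : ℕ) (hr1 : 1 ≤ r) (hrd : r ≤ d) :
    ∃ (r' : ℕ) (_ : r' < r)
      (Wt : ∀ j : ℕ, Matrix (Fin (dims (j+1))) (Fin (dims j)) ℝ),
      (∀ j, j ≠ r' → Wt j = W j) ∧ (Wt r').rank ≤ 1 ∧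
      ∀ x : EuclideanSpace ℝ (Fin (dims 0)), ‖x‖ ≤ B →
        ‖netEval dims W σ d x - netEval dims Wt σ d x‖ ≤
          B * (∏ j ∈ Finset.range d, specNorm (W j)) *
            (2 * p * Real.log (M / Γ) / r) ^ (1 / p) :=
  rank_one_replacement_general dims d W σ hσ hσ0 p Γ M B hp hΓ hΓle hM r hr1 hrd
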